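/- In the market with m = 3 units and two buyers with valuations v_1 = v_2 = 11/10 and budgets B_1 = B_2 = 1, there is no envy-free price at which all 3 units are sold. Formally, for every price p > 0 and allocation (x_1, x_2) with x_i ∈ D_i(p) for both i, we have x_1 + x_2 ≤ 2 < 3. -/
import Mathlib


/-- Demand set of a buyer with valuation `v`, budget `B`, at price `p`,
in a market with `m` units. -/
def demand (v B p : ℝ) (m : ℕ) : Set ℕ :=
  if p < v then { min (⌊B / p⌋).toNat m }
  else if v = p then { k | k ≤ min (⌊B / p⌋).toNat m }
  else {0}

/-- In the market with `m = 3` units and two buyers with valuations `11/10`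
and budgets `1`, no envy-free price sells all 3 units: any allocation supported
at a price `p > 0` sells at most `2 < 3` units. -/
theorem no_envyfree_clearing_price (p : ℝ) (hp : 0 < p) (x₁ x₂ : ℕ)
    (hx₁ : x₁ ∈ demand (11/10) 1 p 3) (hx₂ : x₂ ∈ demand (11/10) 1 p 3)
    (hsupply : x₁ + x₂ ≤ 3) :
    x₁ + x₂ ≤ 2 ∧ 2 < 3 := by
  refine ⟨?_, by norm_num⟩
  unfold demand at hx₁ hx₂
  split_ifs at hx₁ hx₂ with h1 h2
  · -- p < 11/10 : both equal the same value
    simp only [Set.mem_singleton_iff] at hx₁ hx₂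
    subst hx₁; subst hx₂
    omega
  · -- 11/10 = p : floor (1/p) = 0
    have hfl : ⌊(1 : ℝ) / p⌋ = 0 := by
      rw [← h2]
      rw [Int.floor_eq_zero_iff]
      constructor <;> norm_num
    simp only [Set.mem_setOf_eq, hfl] at hx₁ hx₂
    omega
  · simp only [Set.mem_singleton_iff] at hx₁ hx₂
    omega
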